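/- The functional L_{(n_k)} is bounded on ΛBV^{(p)} with bound 2: for every f : [0,1] → ℝ with V_{Λ,p}(f) < ∞, |L_{(n_k)}(f)| ≤ ‖f‖_{Λ,p}·(1 + ‖h‖_{Λ,q}) ≤ 2‖f‖_{Λ,p}, where ‖f‖_{Λ,p} := |f(0)| + V_{Λ,p}(f). -/

import Mathlib

open Filter Set
open scoped ENNReal Classical

noncomputable section

/-- `Λ = （λ_i)_{i≥1}` is a Waterman sequence: positive, nondecreasing, `λ_1 = 1`,
and `∑ 1/λ_i = ∞`. -/
def WatermanSeq (lam : ℕ → ℝ) : Prop :=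
  (∀ i, 0 < lam i) ∧ Monotone lam ∧ lam 1 = 1 ∧
    Tendsto (fun n => ∑ i ∈ Finset.Icc 1 n, 1 / lam i) atTop atTop

/-- `Λ(M) = ∑_{i=1}^{M} 1/λ_i`. -/
def LamSum (lam : ℕ → ℝ) (M : ℕ) : ℝ := ∑ i ∈ Finset.Icc 1 M, 1 / lam i

/-- `{[a i, b i]}_{i < m}` is a finite family of pairwise non-overlapping closed
subintervals of `[0,1]`. -/
def NonOverlapping (m : ℕ) (a b : ℕ → ℝ) : Prop :=
  (∀ i < m, 0 ≤ a i ∧ a i ≤ b i ∧ b i ≤ 1) ∧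
    ∀ i < m, ∀ j < m, i ≠ j → b i ≤ a j ∨ b j ≤ a i

/-- `(∑_{i=1}^m |f(I_i)|^s / λ_i)^{1/s}` for the family `I_i = [a i, b i]`. -/
def vSum (lam : ℕ → ℝ) (s : ℝ) (f : ℝ → ℝ) (m : ℕ) (a b : ℕ → ℝ) : ℝ :=
  (∑ i ∈ Finset.range m, |f (b i) - f (a i)| ^ s / lam (i + 1)) ^ (1 / s)

/-- The `s`-`Λ`-variation `V_{Λ,s}(f)`, an element of `[0,∞]`. -/
def variation (lam : ℕ → ℝ) (s : ℝ) (f : ℝ → ℝ) : ℝ≥0∞ :=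
  ⨆ (m : ℕ) (a : ℕ → ℝ) (b : ℕ → ℝ) (_ : NonOverlapping m a b),
    ENNReal.ofReal (vSum lam s f m a b)

/-- `M_n = 2^(3n-1)`. -/
def Mseq (n : ℕ) : ℕ := 2 ^ (3 * n - 1)

/-- `b_{n,j} = 2^{-n} + (2j-2)/2^{4n}`. -/
def bb (n j : ℕ) : ℝ := ((2 : ℝ) ^ n)⁻¹ + (2 * (j : ℝ) - 2) / 2 ^ (4 * n)

/-- `c_{n,j} = 2^{-n} + (2j-1)/2^{4n}`. -/
def cc (n j : ℕ) : ℝ := ((2 : ℝ) ^ n)⁻¹ + (2 * (j : ℝ) - 1) / 2 ^ (4 * n)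

/-- The function `h_n`. -/
def hfun (lam : ℕ → ℝ) (q : ℝ) (n : ℕ) (y : ℝ) : ℝ :=
  if ∃ j, 1 ≤ j ∧ j ≤ (Mseq n - 2) / 2 ∧ y ∈ Set.Ico (bb n j) (cc n j) then
    ((2 : ℝ) ^ n)⁻¹ * LamSum lam (Mseq n) ^ (-(1 / q))
  else 0

/-- `h = ∑_{n=2}^∞ h_n`. -/
def hh (lam : ℕ → ℝ) (q : ℝ) (y : ℝ) : ℝ := ∑' n : ℕ, hfun lam q (n + 2) y

/-- The sequence `r`: `r_{2k} = c_{k+2,(M_{k+2}-2)/2}`, `r_{2k+1} = b_{k+2,(M_{k+2}-2)/2}`. -/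
def rr (i : ℕ) : ℝ :=
  if i % 2 = 0 then cc (i / 2 + 2) ((Mseq (i / 2 + 2) - 2) / 2)
  else bb (i / 2 + 2) ((Mseq (i / 2 + 2) - 2) / 2)

/-- `f(J_i) = f(r_{i-1}) - f(r_i)` where `J_i = [r_i, r_{i-1}]` (for `i ≥ 1`). -/
def incrJ (f : ℝ → ℝ) (i : ℕ) : ℝ := f (rr (i - 1)) - f (rr i)

/-- `p_{(n_k)}(j) = (-1)^{k+1}` if `j = n_k` for some `k ≥ 1`, and `0` otherwise. -/
def psgn (nseq : ℕ → ℕ) (j : ℕ) : ℝ :=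
  if h : ∃ k, 1 ≤ k ∧ nseq k = j then (-1 : ℝ) ^ (h.choose + 1) else 0

/-- The `j`-th (here `j = m+1`, `m : ℕ`) term of the series defining `L_{(n_k)}`:
`p_{(n_k)}(j) ∑_{i=1}^2 (-1)^i f(J_{2(j-1)+i}) |h(J_{2(j-1)+i})| / λ_{2(j-1)+i}`. -/
def Lterm (lam : ℕ → ℝ) (q : ℝ) (nseq : ℕ → ℕ) (f : ℝ → ℝ) (m : ℕ) : ℝ :=
  psgn nseq (m + 1) * ∑ i ∈ Finset.Icc 1 2,
    (-1 : ℝ) ^ i * incrJ f (2 * m + i) * |incrJ (hh lam q) (2 * m + i)| / lam (2 * m + i)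

/-- The functional `L_{(n_k)}(f) = f(J') + ∑_{j=1}^∞ (…)`, with `J' = [3/8, 3/8 + 2⁻⁸]`. -/
def Lfun (lam : ℕ → ℝ) (q : ℝ) (nseq : ℕ → ℕ) (f : ℝ → ℝ) : ℝ :=
  (f (3 / 8 + 1 / 2 ^ 8) - f (3 / 8)) + ∑' m : ℕ, Lterm lam q nseq f m

/-- The tent function `f_l`. -/
def tent (nseq : ℕ → ℕ) (l : ℕ) (x : ℝ) : ℝ :=
  if 3 / 8 < x ∧ x ≤ 3 / 8 + 1 / 2 ^ 8 then psgn nseq l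
  else if rr (2 * l) ≤ x ∧ x ≤ rr (2 * l - 1) then
    (x - rr (2 * l)) / (rr (2 * l - 1) - rr (2 * l))
  else if rr (2 * l - 1) ≤ x ∧ x ≤ rr (2 * l - 2) then
    (rr (2 * l - 2) - x) / (rr (2 * l - 2) - rr (2 * l - 1))
  else 0

/-!
`|f(J')| ≤ V_{Λ,p}(f)`, and Hölder's inequality over the non-overlapping intervals `J_i` bounds
the series by `V_{Λ,p}(f) V_{Λ,q}(h)`; it remains to see `h(0) = 0` and `V_{Λ,q}(h) ≤ 1`.
An interval on which `h` changes contains a breakpoint `b_{n,j}` or `c_{n,j}` of some level `n`,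
and the change is at most the plateau height `v_n = 2^{-n} Λ(M_n)^{-1/q}`. Distinct intervals of a
family get distinct breakpoints, and there are at most `M_n` of level `n`, so, `λ` being
nondecreasing, the intervals charged to level `n` contribute at most
`v_n^q Λ(M_n) = 2^{-nq} ≤ 2^{-n}`. Summing over `n ≥ 2` gives `V_{Λ,q}(h)^q ≤ 1`.
-/

open Finset

section LambdaVariation

variable {lam : ℕ → ℝ} {s : ℝ} {f : ℝ → ℝ}

lemma ofReal_vSum_le_variation {m : ℕ} {a b : ℕ → ℝ} (h : NonOverlapping m a b) :
    ENNReal.ofReal (vSum lam s f m a b) ≤ variation lam s f :=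
  le_iSup_of_le m (le_iSup_of_le a (le_iSup_of_le b (le_iSup_of_le h le_rfl)))

lemma vSum_le_toReal_variation {m : ℕ} {a b : ℕ → ℝ} (h : NonOverlapping m a b)
    (hf : variation lam s f ≠ ⊤) : vSum lam s f m a b ≤ (variation lam s f).toReal :=
  (ENNReal.ofReal_le_iff_le_toReal hf).1 (ofReal_vSum_le_variation h)

lemma vSum_nonneg (hpos : ∀ i, 0 < lam i) (m : ℕ) (a b : ℕ → ℝ) : 0 ≤ vSum lam s f m a b :=
  Real.rpow_nonneg (sum_nonneg fun _ _ =>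
    div_nonneg (Real.rpow_nonneg (abs_nonneg _) _) (hpos _).le) _

lemma abs_sub_le_toReal_variation (hlam1 : lam 1 = 1) (hs : s ≠ 0) {x y : ℝ} (hx : 0 ≤ x)
    (hxy : x ≤ y) (hy : y ≤ 1) (hf : variation lam s f ≠ ⊤) :
    |f y - f x| ≤ (variation lam s f).toReal := by
  have hI : NonOverlapping 1 (fun _ => x) (fun _ => y) :=
    ⟨fun _ _ => ⟨hx, hxy, hy⟩, fun i hi j hj hij => by omega⟩
  have := vSum_le_toReal_variation hI hf
  rwa [vSum, sum_range_one, zero_add, hlam1, div_one, ← Real.rpow_mul (abs_nonneg _),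
    mul_one_div_cancel hs, Real.rpow_one] at this

lemma sum_abs_mul_abs_div_le_variation_mul_variation {p q : ℝ} {g : ℝ → ℝ}
    (hpos : ∀ i, 0 < lam i) (hpq : p.HolderConjugate q) {m : ℕ} {a b : ℕ → ℝ}
    (h : NonOverlapping m a b) (hf : variation lam p f ≠ ⊤) (hg : variation lam q g ≠ ⊤) :
    ∑ i ∈ range m, |f (b i) - f (a i)| * |g (b i) - g (a i)| / lam (i + 1) ≤
      (variation lam p f).toReal * (variation lam q g).toReal := by
  have hroot : ∀ (r : ℝ) (φ : ℝ → ℝ) (i : ℕ), 0 ≤ |φ (b i) - φ (a i)| / lam (i + 1) ^ r⁻¹ :=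
    fun r φ i => div_nonneg (abs_nonneg _) (Real.rpow_nonneg (hpos _).le _)
  have hpow : ∀ {r : ℝ}, r ≠ 0 → ∀ (φ : ℝ → ℝ) (i : ℕ),
      (|φ (b i) - φ (a i)| / lam (i + 1) ^ r⁻¹) ^ r = |φ (b i) - φ (a i)| ^ r / lam (i + 1) :=
    fun hr φ i => by
      rw [Real.div_rpow (abs_nonneg _) (Real.rpow_nonneg (hpos _).le _),
        Real.rpow_inv_rpow (hpos _).le hr]
  calc ∑ i ∈ range m, |f (b i) - f (a i)| * |g (b i) - g (a i)| / lam (i + 1)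
      = ∑ i ∈ range m, (|f (b i) - f (a i)| / lam (i + 1) ^ p⁻¹) *
          (|g (b i) - g (a i)| / lam (i + 1) ^ q⁻¹) := by
        refine sum_congr rfl fun i _ => ?_
        rw [div_mul_div_comm, ← Real.rpow_add (hpos _), hpq.inv_add_inv_eq_one, Real.rpow_one]
    _ ≤ vSum lam p f m a b * vSum lam q g m a b := by
        simp only [vSum, ← hpow hpq.ne_zero, ← hpow hpq.symm.ne_zero]
        exact Real.inner_le_Lp_mul_Lq_of_nonneg (range m) hpq (fun i _ => hroot _ _ _)
          (fun i _ => hroot _ _ _)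
    _ ≤ (variation lam p f).toReal * (variation lam q g).toReal :=
        mul_le_mul (vSum_le_toReal_variation h hf) (vSum_le_toReal_variation h hg)
          (vSum_nonneg hpos m a b) ENNReal.toReal_nonneg

lemma NonOverlapping.injOn {m : ℕ} {a b : ℕ → ℝ} (h : NonOverlapping m a b) {S : Finset ℕ}
    (hS : S ⊆ range m) {t : ℕ → ℝ} (ht : ∀ i ∈ S, t i ∈ Ioc (a i) (b i)) :
    InjOn t S := by
  intro i hi j hj hij
  by_contra hne
  have hi' := ht i hi
  have hj' := ht j hj
  rcases h.2 i (mem_range.1 (hS hi)) j (mem_range.1 (hS hj)) hne with hc | hc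
  · linarith [hi'.2, hj'.1]
  · linarith [hi'.1, hj'.2]

end LambdaVariation

section LamSum

variable {lam : ℕ → ℝ}

lemma lamSum_pos (hpos : ∀ i, 0 < lam i) {M : ℕ} (hM : 0 < M) : 0 < LamSum lam M :=
  sum_pos (fun i _ => one_div_pos.2 (hpos i)) (nonempty_Icc.2 hM)

lemma lamSum_mono (hpos : ∀ i, 0 < lam i) : Monotone (LamSum lam) := fun _ _ h =>
  sum_le_sum_of_subset_of_nonneg (Icc_subset_Icc_right h) fun i _ _ => (one_div_pos.2 (hpos i)).le

lemma lamSum_succ (M : ℕ) : LamSum lam (M + 1) = LamSum lam M + 1 / lam (M + 1) :=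
  sum_Icc_succ_top (Nat.le_add_left 1 M) _

lemma sum_one_div_le_lamSum_card (hpos : ∀ i, 0 < lam i) (hmono : Monotone lam) (S : Finset ℕ) :
    ∑ i ∈ S, 1 / lam (i + 1) ≤ LamSum lam S.card := by
  induction S using Finset.induction_on_max with
  | empty => simp [LamSum]
  | insert a S ha ih =>
    have haS : a ∉ S := fun h => lt_irrefl a (ha a h)
    have hcard : S.card ≤ a := (Finset.card_le_card fun x hx => mem_range.2 (ha x hx)).trans_eq
      (card_range a)
    rw [sum_insert haS, card_insert_of_notMem haS, lamSum_succ, add_comm]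
    exact add_le_add ih (one_div_le_one_div_of_le (hpos _) (hmono (by omega)))

end LamSum

section Breakpoints

lemma Mseq_pos (n : ℕ) : 0 < Mseq n := by unfold Mseq; positivity

lemma Mseq_mono : Monotone Mseq := fun _ _ h => Nat.pow_le_pow_right two_pos (by omega)

lemma bb_le_cc (n j : ℕ) : bb n j ≤ cc n j := by
  unfold bb cc
  gcongr
  linarith

lemma inv_two_pow_le_bb {n j : ℕ} (hj : 1 ≤ j) : ((2 : ℝ) ^ n)⁻¹ ≤ bb n j := by
  have hj' : (1 : ℝ) ≤ j := by exact_mod_cast hj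
  unfold bb
  have : 0 ≤ (2 * (j : ℝ) - 2) / 2 ^ (4 * n) := div_nonneg (by linarith) (by positivity)
  linarith

lemma cc_le {n j : ℕ} (hn : 1 ≤ n) (hj : j ≤ (Mseq n - 2) / 2) :
    cc n j ≤ ((2 : ℝ) ^ n)⁻¹ + ((2 : ℝ) ^ (n + 1))⁻¹ := by
  have hj' : 2 * (j : ℝ) ≤ 2 ^ (3 * n - 1) := by
    have : 2 * j ≤ Mseq n := by omega
    exact_mod_cast this
  have hsplit : (2 : ℝ) ^ (4 * n) = 2 ^ (n + 1) * 2 ^ (3 * n - 1) := by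
    rw [← pow_add]
    congr 1
    omega
  suffices (2 * (j : ℝ) - 1) / 2 ^ (4 * n) ≤ ((2 : ℝ) ^ (n + 1))⁻¹ by unfold cc; linarith
  rw [div_le_iff₀ (by positivity), hsplit, ← mul_assoc, inv_mul_cancel₀ (by positivity), one_mul]
  linarith

lemma inv_two_pow_add_inv_two_pow_succ_lt {n n' : ℕ} (h : n < n') :
    ((2 : ℝ) ^ n')⁻¹ + ((2 : ℝ) ^ (n' + 1))⁻¹ < ((2 : ℝ) ^ n)⁻¹ := by
  have h1 : ((2 : ℝ) ^ n')⁻¹ ≤ ((2 : ℝ) ^ (n + 1))⁻¹ :=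
    inv_anti₀ (by positivity) (pow_le_pow_right₀ one_le_two h)
  have h2 : (0 : ℝ) < ((2 : ℝ) ^ n)⁻¹ := by positivity
  rw [pow_succ, mul_inv] at h1 ⊢
  linarith

lemma sum_inv_two_pow_le_one {N : Finset ℕ} (hN : 0 ∉ N) : ∑ n ∈ N, ((2 : ℝ) ^ n)⁻¹ ≤ 1 := by
  have := summable_geometric_two.sum_le_tsum (insert 0 N) fun _ _ => by positivity
  rw [sum_insert hN, tsum_geometric_two] at this
  simp only [one_div, inv_pow] at this
  linarith

def plateauIndices (n : ℕ) : Finset ℕ := Finset.Icc 1 ((Mseq n - 2) / 2)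

def breakpoints (n : ℕ) : Finset ℝ :=
  (plateauIndices n).image (bb n) ∪ (plateauIndices n).image (cc n)

lemma bb_mem_breakpoints {n j : ℕ} (hj : j ∈ plateauIndices n) : bb n j ∈ breakpoints n :=
  mem_union_left _ (mem_image_of_mem _ hj)

lemma cc_mem_breakpoints {n j : ℕ} (hj : j ∈ plateauIndices n) : cc n j ∈ breakpoints n :=
  mem_union_right _ (mem_image_of_mem _ hj)

lemma card_breakpoints_le (n : ℕ) : (breakpoints n).card ≤ Mseq n := by
  have hcard : (plateauIndices n).card = (Mseq n - 2) / 2 := by simp [plateauIndices]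
  have := (Finset.card_union_le _ _).trans
    (add_le_add (card_image_le (s := plateauIndices n) (f := bb n))
      (card_image_le (s := plateauIndices n) (f := cc n)))
  unfold breakpoints
  omega

end Breakpoints

section Plateaus

def InPlateau (n : ℕ) (y : ℝ) : Prop :=
  ∃ j, 1 ≤ j ∧ j ≤ (Mseq n - 2) / 2 ∧ y ∈ Ico (bb n j) (cc n j)

def plateauValue (lam : ℕ → ℝ) (q : ℝ) (n : ℕ) : ℝ :=
  ((2 : ℝ) ^ n)⁻¹ * LamSum lam (Mseq n) ^ (-(1 / q))

variable {lam : ℕ → ℝ} {q : ℝ}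

lemma hfun_eq_ite (n : ℕ) (y : ℝ) :
    hfun lam q n y = if InPlateau n y then plateauValue lam q n else 0 := rfl

lemma InPlateau.mem_Ico {n : ℕ} {y : ℝ} (hn : 1 ≤ n) (h : InPlateau n y) :
    y ∈ Ico ((2 : ℝ) ^ n)⁻¹ (((2 : ℝ) ^ n)⁻¹ + ((2 : ℝ) ^ (n + 1))⁻¹) := by
  obtain ⟨j, hj1, hj2, hy⟩ := h
  exact ⟨(inv_two_pow_le_bb hj1).trans hy.1, hy.2.trans_le (cc_le hn hj2)⟩

/-- Plateaus of higher level lie further to the left. -/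
lemma InPlateau.le_of_le {n n' : ℕ} {y y' : ℝ} (hn : 1 ≤ n) (hn' : 1 ≤ n') (hy : y ≤ y')
    (h : InPlateau n y) (h' : InPlateau n' y') : n' ≤ n := by
  by_contra! hlt
  linarith [(h.mem_Ico hn).1, (h'.mem_Ico hn').2, inv_two_pow_add_inv_two_pow_succ_lt hlt]

lemma InPlateau.eq {n n' : ℕ} {y : ℝ} (hn : 1 ≤ n) (hn' : 1 ≤ n') (h : InPlateau n y)
    (h' : InPlateau n' y) : n = n' :=
  le_antisymm (h'.le_of_le hn' hn le_rfl h) (h.le_of_le hn hn' le_rfl h')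

lemma hh_eq_plateauValue {n : ℕ} {y : ℝ} (hn : 2 ≤ n) (h : InPlateau n y) :
    hh lam q y = plateauValue lam q n := by
  rw [hh, tsum_eq_single (n - 2), Nat.sub_add_cancel hn, hfun_eq_ite, if_pos h]
  intro c hc
  rw [hfun_eq_ite, if_neg fun h' => hc ?_]
  have := h'.eq (by omega) (by omega) h
  omega

lemma hh_eq_zero {y : ℝ} (h : ∀ n, 2 ≤ n → ¬InPlateau n y) : hh lam q y = 0 :=
  (tsum_congr fun c => by rw [hfun_eq_ite, if_neg (h _ (Nat.le_add_left 2 c))]).trans tsum_zero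

lemma hh_zero : hh lam q 0 = 0 :=
  hh_eq_zero fun n hn h => (h.mem_Ico (by omega)).1.not_gt (by positivity)

lemma plateauValue_pos (hpos : ∀ i, 0 < lam i) (n : ℕ) : 0 < plateauValue lam q n :=
  mul_pos (by positivity) (Real.rpow_pos_of_pos (lamSum_pos hpos (Mseq_pos n)) _)

lemma plateauValue_anti (hpos : ∀ i, 0 < lam i) (hq : 0 < q) {n n' : ℕ} (h : n ≤ n') :
    plateauValue lam q n' ≤ plateauValue lam q n :=
  mul_le_mul (inv_anti₀ (by positivity) (pow_le_pow_right₀ one_le_two h))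
    (Real.rpow_le_rpow_of_nonpos (lamSum_pos hpos (Mseq_pos n))
      (lamSum_mono hpos (Mseq_mono h)) (by simp [hq.le]))
    (Real.rpow_pos_of_pos (lamSum_pos hpos (Mseq_pos n')) _).le (by positivity)

lemma plateauValue_rpow_mul_lamSum (hpos : ∀ i, 0 < lam i) (hq : 0 < q) (n : ℕ) :
    plateauValue lam q n ^ q * LamSum lam (Mseq n) = ((2 : ℝ) ^ n)⁻¹ ^ q := by
  have hL := lamSum_pos (lam := lam) hpos (Mseq_pos n)
  rw [plateauValue, Real.mul_rpow (by positivity) (Real.rpow_nonneg hL.le _),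
    ← Real.rpow_mul hL.le, show -(1 / q) * q = -1 by field_simp, Real.rpow_neg_one,
    mul_assoc, inv_mul_cancel₀ hL.ne', mul_one]

lemma hh_nonneg (hpos : ∀ i, 0 < lam i) (y : ℝ) : 0 ≤ hh lam q y :=
  tsum_nonneg fun c => by
    rw [hfun_eq_ite]
    split_ifs
    exacts [(plateauValue_pos hpos _).le, le_rfl]

lemma hh_le_plateauValue (hpos : ∀ i, 0 < lam i) (hq : 0 < q) {n : ℕ} {a b : ℝ} (hab : a ≤ b)
    (hn : 2 ≤ n) (hb : InPlateau n b) : hh lam q a ≤ plateauValue lam q n := by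
  by_cases ha : ∃ n', 2 ≤ n' ∧ InPlateau n' a
  · obtain ⟨n', hn', ha⟩ := ha
    rw [hh_eq_plateauValue hn' ha]
    exact plateauValue_anti hpos hq (ha.le_of_le (by omega) (by omega) hab hb)
  · push Not at ha
    rw [hh_eq_zero ha]
    exact (plateauValue_pos hpos n).le

lemma exists_breakpoint_mem_Ioc (hpos : ∀ i, 0 < lam i) (hq : 0 < q) {a b : ℝ} (hab : a ≤ b)
    (hne : hh lam q a ≠ hh lam q b) :
    ∃ n t, 2 ≤ n ∧ t ∈ breakpoints n ∧ t ∈ Ioc a b ∧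
      |hh lam q b - hh lam q a| ≤ plateauValue lam q n := by
  by_cases hb : ∃ n, 2 ≤ n ∧ InPlateau n b
  · obtain ⟨n, hn, hbn⟩ := hb
    obtain ⟨j, hj1, hj2, hbj⟩ := id hbn
    refine ⟨n, bb n j, hn, bb_mem_breakpoints (Finset.mem_Icc.2 ⟨hj1, hj2⟩), ⟨?_, hbj.1⟩, ?_⟩
    · by_contra! hba
      exact hne (by rw [hh_eq_plateauValue hn ⟨j, hj1, hj2, hba, hab.trans_lt hbj.2⟩,
        hh_eq_plateauValue hn hbn])
    · exact abs_sub_le_of_nonneg_of_le (hh_nonneg hpos b) (hh_eq_plateauValue hn hbn).le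
        (hh_nonneg hpos a) (hh_le_plateauValue hpos hq hab hn hbn)
  · push Not at hb
    have hb0 : hh lam q b = 0 := hh_eq_zero hb
    obtain ⟨n, hn, han⟩ : ∃ n, 2 ≤ n ∧ InPlateau n a := by
      by_contra! ha
      exact hne (by rw [hh_eq_zero ha, hb0])
    obtain ⟨j, hj1, hj2, haj⟩ := id han
    refine ⟨n, cc n j, hn, cc_mem_breakpoints (Finset.mem_Icc.2 ⟨hj1, hj2⟩), ⟨haj.2, ?_⟩, ?_⟩
    · by_contra! hbc
      exact hb n hn ⟨j, hj1, hj2, haj.1.trans hab, hbc⟩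
    · rw [hb0, hh_eq_plateauValue hn han, zero_sub, abs_neg,
        abs_of_pos (plateauValue_pos hpos n)]

lemma sum_rpow_div_le_inv_two_pow (hpos : ∀ i, 0 < lam i) (hmono : Monotone lam) (hq : 1 ≤ q)
    {n : ℕ} {S : Finset ℕ} {x t : ℕ → ℝ} (ht : InjOn t S) (hbrk : ∀ i ∈ S, t i ∈ breakpoints n)
    (hx : ∀ i ∈ S, |x i| ≤ plateauValue lam q n) :
    ∑ i ∈ S, |x i| ^ q / lam (i + 1) ≤ ((2 : ℝ) ^ n)⁻¹ := by
  have hq0 : 0 < q := by linarith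
  have hcard : S.card ≤ Mseq n :=
    (card_le_card_of_injOn t hbrk ht).trans (card_breakpoints_le n)
  calc ∑ i ∈ S, |x i| ^ q / lam (i + 1)
      ≤ ∑ i ∈ S, plateauValue lam q n ^ q * (1 / lam (i + 1)) := sum_le_sum fun i hi => by
        rw [mul_one_div]
        gcongr
        · exact (hpos _).le
        · exact hx i hi
    _ ≤ plateauValue lam q n ^ q * LamSum lam (Mseq n) := by
        rw [← mul_sum]
        gcongr
        · exact Real.rpow_nonneg (plateauValue_pos hpos n).le q
        · exact (sum_one_div_le_lamSum_card hpos hmono S).trans (lamSum_mono hpos hcard)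
    _ = ((2 : ℝ) ^ n)⁻¹ ^ q := plateauValue_rpow_mul_lamSum hpos hq0 n
    _ ≤ ((2 : ℝ) ^ n)⁻¹ :=
        Real.rpow_le_self_of_le_one (by positivity)
          (inv_le_one_of_one_le₀ (one_le_pow₀ one_le_two)) hq

lemma sum_abs_hh_sub_rpow_div_le_one (hpos : ∀ i, 0 < lam i) (hmono : Monotone lam) (hq : 1 ≤ q)
    {m : ℕ} {a b : ℕ → ℝ} (h : NonOverlapping m a b) :
    ∑ i ∈ range m, |hh lam q (b i) - hh lam q (a i)| ^ q / lam (i + 1) ≤ 1 := by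
  have hq0 : 0 < q := by linarith
  set Δ : ℕ → ℝ := fun i => hh lam q (b i) - hh lam q (a i)
  set S := (range m).filter fun i => Δ i ≠ 0
  have key : ∀ i, ∃ n t, i ∈ S →
      2 ≤ n ∧ t ∈ breakpoints n ∧ t ∈ Ioc (a i) (b i) ∧ |Δ i| ≤ plateauValue lam q n := by
    intro i
    by_cases hi : i ∈ S
    · obtain ⟨him, hΔi⟩ := mem_filter.1 hi
      obtain ⟨n, t, hnt⟩ := exists_breakpoint_mem_Ioc hpos hq0 (h.1 i (mem_range.1 him)).2.1
        fun e => hΔi (sub_eq_zero.2 e.symm)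
      exact ⟨n, t, fun _ => hnt⟩
    · exact ⟨0, 0, fun hi' => absurd hi' hi⟩
  choose level t hlt using key
  calc ∑ i ∈ range m, |Δ i| ^ q / lam (i + 1)
      = ∑ i ∈ S, |Δ i| ^ q / lam (i + 1) :=
        (sum_filter_of_ne (p := fun i => Δ i ≠ 0) fun i _ hne hΔ0 => hne (by
          rw [hΔ0, abs_zero, Real.zero_rpow hq0.ne', zero_div])).symm
    _ = ∑ n ∈ S.image level, ∑ i ∈ S with level i = n, |Δ i| ^ q / lam (i + 1) :=
        (sum_fiberwise_of_maps_to (fun i hi => mem_image_of_mem level hi) _).symm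
    _ ≤ ∑ n ∈ S.image level, ((2 : ℝ) ^ n)⁻¹ := sum_le_sum fun n _ =>
        sum_rpow_div_le_inv_two_pow hpos hmono hq
          (h.injOn (filter_subset _ _ |>.trans (filter_subset _ _))
            fun i hi => (hlt i (mem_filter.1 hi).1).2.2.1)
          (fun i hi => (mem_filter.1 hi).2 ▸ (hlt i (mem_filter.1 hi).1).2.1)
          fun i hi => (mem_filter.1 hi).2 ▸ (hlt i (mem_filter.1 hi).1).2.2.2
    _ ≤ 1 := sum_inv_two_pow_le_one fun h0 => by
        obtain ⟨i, hi, hi0⟩ := mem_image.1 h0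
        have := (hlt i hi).1
        omega

lemma variation_hh_le_one (hpos : ∀ i, 0 < lam i) (hmono : Monotone lam) (hq : 1 ≤ q) :
    variation lam q (hh lam q) ≤ 1 :=
  iSup_le fun m => iSup_le fun a => iSup_le fun b => iSup_le fun h => by
    rw [ENNReal.ofReal_le_one, vSum]
    exact Real.rpow_le_one (sum_nonneg fun i _ =>
      div_nonneg (Real.rpow_nonneg (abs_nonneg _) _) (hpos _).le)
      (sum_abs_hh_sub_rpow_div_le_one hpos hmono hq h) (one_div_nonneg.2 (by linarith))

end Plateaus

section Functional

lemma rr_mem_Icc {i n : ℕ} (hn : i / 2 + 2 = n) :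
    rr i ∈ Icc ((2 : ℝ) ^ n)⁻¹ (((2 : ℝ) ^ n)⁻¹ + ((2 : ℝ) ^ (n + 1))⁻¹) := by
  have hK : 1 ≤ (Mseq n - 2) / 2 := by
    have : 4 ≤ Mseq n := (Nat.pow_le_pow_right two_pos (by omega) : 2 ^ 2 ≤ 2 ^ (3 * n - 1))
    omega
  unfold rr
  rw [hn]
  split_ifs
  · exact ⟨(inv_two_pow_le_bb hK).trans (bb_le_cc _ _), cc_le (by omega) le_rfl⟩
  · exact ⟨inv_two_pow_le_bb hK, (bb_le_cc _ _).trans (cc_le (by omega) le_rfl)⟩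

lemma rr_succ_le (i : ℕ) : rr (i + 1) ≤ rr i := by
  obtain ⟨k, rfl | rfl⟩ := Nat.even_or_odd' i
  · have h0 : 2 * k % 2 = 0 := by omega
    have h1 : (2 * k + 1) % 2 ≠ 0 := by omega
    simp only [rr, h0, h1, if_true, if_false, show (2 * k + 1) / 2 = 2 * k / 2 by omega]
    exact bb_le_cc _ _
  · linarith [(rr_mem_Icc (i := 2 * k + 1 + 1) (n := k + 3) (by omega)).2,
      (rr_mem_Icc (i := 2 * k + 1) (n := k + 2) (by omega)).1,
      inv_two_pow_add_inv_two_pow_succ_lt (show k + 2 < k + 3 by omega)]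

lemma rr_antitone : Antitone rr := antitone_nat_of_succ_le rr_succ_le

lemma nonOverlapping_rr (N : ℕ) : NonOverlapping N (fun i => rr (i + 1)) rr := by
  refine ⟨fun i _ => ⟨(rr_mem_Icc rfl).1.trans' (by positivity), rr_succ_le i, ?_⟩,
    fun i _ j _ hij => ?_⟩
  · have := (rr_mem_Icc (i := 0) (n := 2) rfl).2
    norm_num at this
    linarith [rr_antitone (Nat.zero_le i)]
  · rcases lt_or_gt_of_ne hij with h | h
    · exact Or.inr (rr_antitone h)
    · exact Or.inl (rr_antitone h)

variable {lam : ℕ → ℝ} {p q : ℝ} {f : ℝ → ℝ}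

lemma abs_psgn_le_one (nseq : ℕ → ℕ) (j : ℕ) : |psgn nseq j| ≤ 1 := by
  unfold psgn
  split_ifs <;> simp

lemma abs_Lterm_le (hpos : ∀ i, 0 < lam i) (nseq : ℕ → ℕ) (m : ℕ) :
    |Lterm lam q nseq f m| ≤ ∑ i ∈ Finset.Icc 1 2,
      |incrJ f (2 * m + i)| * |incrJ (hh lam q) (2 * m + i)| / lam (2 * m + i) := by
  rw [Lterm, abs_mul]
  refine (mul_le_of_le_one_left (abs_nonneg _) (abs_psgn_le_one nseq _)).trans
    ((abs_sum_le_sum_abs _ _).trans_eq (sum_congr rfl fun i _ => ?_))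
  rw [abs_div, abs_mul, abs_mul, abs_pow, abs_neg, abs_one, one_pow, one_mul, abs_abs,
    abs_of_pos (hpos _)]

lemma sum_range_sum_Icc_one_two (F : ℕ → ℝ) (N : ℕ) :
    ∑ m ∈ range N, ∑ i ∈ Finset.Icc 1 2, F (2 * m + i) = ∑ i ∈ range (2 * N), F (i + 1) := by
  induction N with
  | zero => simp
  | succ N ih =>
    rw [sum_range_succ, ih, show 2 * (N + 1) = 2 * N + 1 + 1 by ring, sum_range_succ,
      sum_range_succ, show Finset.Icc 1 2 = {1, 2} by decide, sum_pair (by norm_num)]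
    ring_nf

lemma abs_Lfun_le (hpos : ∀ i, 0 < lam i) (hlam1 : lam 1 = 1) (hpq : p.HolderConjugate q)
    (nseq : ℕ → ℕ) (hf : variation lam p f ≠ ⊤) (hh_fin : variation lam q (hh lam q) ≠ ⊤) :
    |Lfun lam q nseq f| ≤ (variation lam p f).toReal +
      (variation lam p f).toReal * (variation lam q (hh lam q)).toReal := by
  have hpartial : ∀ N, ∑ m ∈ range N, |Lterm lam q nseq f m| ≤
      (variation lam p f).toReal * (variation lam q (hh lam q)).toReal := fun N =>
    calc ∑ m ∈ range N, |Lterm lam q nseq f m|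
        ≤ ∑ m ∈ range N, ∑ i ∈ Finset.Icc 1 2,
            |incrJ f (2 * m + i)| * |incrJ (hh lam q) (2 * m + i)| / lam (2 * m + i) :=
          sum_le_sum fun m _ => abs_Lterm_le hpos nseq m
      _ = ∑ i ∈ range (2 * N),
            |incrJ f (i + 1)| * |incrJ (hh lam q) (i + 1)| / lam (i + 1) :=
          sum_range_sum_Icc_one_two (fun i => |incrJ f i| * |incrJ (hh lam q) i| / lam i) N
      _ ≤ _ := by
          simp only [incrJ, Nat.add_sub_cancel]
          exact sum_abs_mul_abs_div_le_variation_mul_variation hpos hpq (nonOverlapping_rr _) hf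
            hh_fin
  have hsum : Summable fun m => |Lterm lam q nseq f m| :=
    summable_of_sum_range_le (fun _ => abs_nonneg _) hpartial
  calc |Lfun lam q nseq f|
      ≤ |f (3 / 8 + 1 / 2 ^ 8) - f (3 / 8)| + |∑' m, Lterm lam q nseq f m| := abs_add_le _ _
    _ ≤ _ := by
        gcongr
        · exact abs_sub_le_toReal_variation hlam1 hpq.ne_zero (by norm_num) (by norm_num)
            (by norm_num) hf
        · have := norm_tsum_le_tsum_norm (f := Lterm lam q nseq f)
            (by simpa only [Real.norm_eq_abs])
          simp only [Real.norm_eq_abs] at this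
          exact this.trans (Real.tsum_le_of_sum_range_le (fun _ => abs_nonneg _) hpartial)

end Functional

theorem stmt11_general (lam : ℕ → ℝ) (hlam : WatermanSeq lam) (p q : ℝ)
    (hp : 1 < p) (hpq : 1 / p + 1 / q = 1)
    (nseq : ℕ → ℕ)
    (f : ℝ → ℝ) (hf : variation lam p f < ⊤) :
    |Lfun lam q nseq f| ≤ (|f 0| + (variation lam p f).toReal) *
      (1 + (|hh lam q 0| + (variation lam q (hh lam q)).toReal)) ∧
    (|f 0| + (variation lam p f).toReal) *
      (1 + (|hh lam q 0| + (variation lam q (hh lam q)).toReal))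
      ≤ 2 * (|f 0| + (variation lam p f).toReal) := by
  obtain ⟨hpos, hmono, hlam1, -⟩ := hlam
  have hpq' : p.HolderConjugate q :=
    Real.holderConjugate_iff.2 ⟨hp, by simpa only [one_div] using hpq⟩
  have hVq : variation lam q (hh lam q) ≤ 1 := variation_hh_le_one hpos hmono hpq'.symm.lt.le
  have hVq' : (variation lam q (hh lam q)).toReal ≤ 1 := by
    simpa using ENNReal.toReal_mono ENNReal.one_ne_top hVq
  have hL := abs_Lfun_le hpos hlam1 hpq' nseq hf.ne (ne_top_of_le_ne_top ENNReal.one_ne_top hVq)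
  have hf0 := abs_nonneg (f 0)
  have hVp0 : 0 ≤ (variation lam p f).toReal := ENNReal.toReal_nonneg
  have hVq0 : 0 ≤ (variation lam q (hh lam q)).toReal := ENNReal.toReal_nonneg
  rw [hh_zero, abs_zero, zero_add]
  constructor <;> nlinarith

/-- `L_{(n_k)}` is bounded on `ΛBV^{(p)}` with bound `2`:
`|L_{(n_k)}(f)| ≤ ‖f‖_{Λ,p}·(1 + ‖h‖_{Λ,q}) ≤ 2‖f‖_{Λ,p}`, where
`‖f‖_{Λ,p} = |f(0)| + V_{Λ,p}(f)`. -/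
theorem stmt11 (lam : ℕ → ℝ) (hlam : WatermanSeq lam) (p q : ℝ)
    (hp : 1 < p) (hq : 1 < q) (hpq : 1 / p + 1 / q = 1)
    (nseq : ℕ → ℕ) (hmono : StrictMono nseq) (hone : 1 ≤ nseq 1)
    (f : ℝ → ℝ) (hf : variation lam p f < ⊤) :
    |Lfun lam q nseq f| ≤ (|f 0| + (variation lam p f).toReal) *
      (1 + (|hh lam q 0| + (variation lam q (hh lam q)).toReal)) ∧
    (|f 0| + (variation lam p f).toReal) *
      (1 + (|hh lam q 0| + (variation lam q (hh lam q)).toReal))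
      ≤ 2 * (|f 0| + (variation lam p f).toReal) :=
  stmt11_general lam hlam p q hp hpq nseq f hf
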